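/- Let m ≥ 4 be even and let points p₁, …, pₙ (n ≥ m + 1) lie on the trigonometric moment curve γ(t) = (cos t, sin t, cos 2t, sin 2t, …, cos (m/2) t, sin (m/2) t) ∈ ℝ^m at distinct parameters in [0, 2π). Then the convex hull of p₁, …, pₙ is an m-dimensional polytope in which every ⌊m/2⌋ of the points form a face; in particular every pair of the points is joined by an edge of the convex hull. -/

import Mathlib

open Real

/-- The trigonometric moment curve
`γ(t) = (cos t, sin t, cos 2t, sin 2t, …, cos (m/2)t, sin (m/2)t) ∈ ℝ^m`. -/
noncomputable def trigMoment (m : ℕ) (t : ℝ) : EuclideanSpace ℝ (Fin m) :=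
  WithLp.toLp 2 fun i : Fin m =>
    if (i : ℕ) % 2 = 0 then Real.cos (((i : ℕ) / 2 + 1 : ℕ) * t)
    else Real.sin (((i : ℕ) / 2 + 1 : ℕ) * t)

/- ### Trigonometric polynomials as a span -/

/-- Generators of trig polynomials of degree at most `k`. -/
def trigSet (k : ℕ) : Set (ℝ → ℝ) :=
  {f | ∃ d : ℤ, d.natAbs ≤ k ∧
    ((f = fun x => Real.cos (d * x)) ∨ (f = fun x => Real.sin (d * x)))}

lemma trigSet_mono {k l : ℕ} (h : k ≤ l) : trigSet k ⊆ trigSet l := by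
  rintro f ⟨d, hd, hf⟩
  exact ⟨d, le_trans hd h, hf⟩

lemma cos_mem_trigSet {k : ℕ} (d : ℤ) (hd : d.natAbs ≤ k) :
    (fun x => Real.cos (d * x)) ∈ trigSet k := ⟨d, hd, Or.inl rfl⟩

lemma sin_mem_trigSet {k : ℕ} (d : ℤ) (hd : d.natAbs ≤ k) :
    (fun x => Real.sin (d * x)) ∈ trigSet k := ⟨d, hd, Or.inr rfl⟩

lemma cos_int_mul_cos (d : ℤ) (x : ℝ) :
    Real.cos (d * x) * Real.cos x
      = (1/2) * Real.cos ((d + 1 : ℤ) * x) + (1/2) * Real.cos ((d - 1 : ℤ) * x) := by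
  have h1 : ((d + 1 : ℤ) : ℝ) * x = d * x + x := by push_cast; ring
  have h2 : ((d - 1 : ℤ) : ℝ) * x = d * x - x := by push_cast; ring
  rw [h1, h2, Real.cos_add, Real.cos_sub]; ring

lemma sin_int_mul_cos (d : ℤ) (x : ℝ) :
    Real.sin (d * x) * Real.cos x
      = (1/2) * Real.sin ((d + 1 : ℤ) * x) + (1/2) * Real.sin ((d - 1 : ℤ) * x) := by
  have h1 : ((d + 1 : ℤ) : ℝ) * x = d * x + x := by push_cast; ring
  have h2 : ((d - 1 : ℤ) : ℝ) * x = d * x - x := by push_cast; ring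
  rw [h1, h2, Real.sin_add, Real.sin_sub]; ring

lemma cos_int_mul_sin (d : ℤ) (x : ℝ) :
    Real.cos (d * x) * Real.sin x
      = (1/2) * Real.sin ((d + 1 : ℤ) * x) + (-(1/2)) * Real.sin ((d - 1 : ℤ) * x) := by
  have h1 : ((d + 1 : ℤ) : ℝ) * x = d * x + x := by push_cast; ring
  have h2 : ((d - 1 : ℤ) : ℝ) * x = d * x - x := by push_cast; ring
  rw [h1, h2, Real.sin_add, Real.sin_sub]; ring

lemma sin_int_mul_sin (d : ℤ) (x : ℝ) :
    Real.sin (d * x) * Real.sin x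
      = (1/2) * Real.cos ((d - 1 : ℤ) * x) + (-(1/2)) * Real.cos ((d + 1 : ℤ) * x) := by
  have h1 : ((d + 1 : ℤ) : ℝ) * x = d * x + x := by push_cast; ring
  have h2 : ((d - 1 : ℤ) : ℝ) * x = d * x - x := by push_cast; ring
  rw [h1, h2, Real.cos_add, Real.cos_sub]; ring

lemma natAbs_succ_le {d : ℤ} {k : ℕ} (hd : d.natAbs ≤ k) :
    (d + 1).natAbs ≤ k + 1 ∧ (d - 1).natAbs ≤ k + 1 := by omega

lemma mul_cos_mem {k : ℕ} {f : ℝ → ℝ} (hf : f ∈ Submodule.span ℝ (trigSet k)) :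
    (fun x => f x * Real.cos x) ∈ Submodule.span ℝ (trigSet (k + 1)) := by
  induction hf using Submodule.span_induction with
  | mem g hg =>
    obtain ⟨d, hd, hg | hg⟩ := hg <;> subst hg
    · have : (fun x => Real.cos (d * x) * Real.cos x)
          = (1/2 : ℝ) • (fun x => Real.cos ((d+1:ℤ) * x))
            + (1/2 : ℝ) • (fun x => Real.cos ((d-1:ℤ) * x)) := by
        funext x
        simpa using cos_int_mul_cos d x
      rw [this]
      exact Submodule.add_mem _
        (Submodule.smul_mem _ _ (Submodule.subset_span (cos_mem_trigSet _ (natAbs_succ_le hd).1)))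
        (Submodule.smul_mem _ _ (Submodule.subset_span (cos_mem_trigSet _ (natAbs_succ_le hd).2)))
    · have : (fun x => Real.sin (d * x) * Real.cos x)
          = (1/2 : ℝ) • (fun x => Real.sin ((d+1:ℤ) * x))
            + (1/2 : ℝ) • (fun x => Real.sin ((d-1:ℤ) * x)) := by
        funext x
        simpa using sin_int_mul_cos d x
      rw [this]
      exact Submodule.add_mem _
        (Submodule.smul_mem _ _ (Submodule.subset_span (sin_mem_trigSet _ (natAbs_succ_le hd).1)))
        (Submodule.smul_mem _ _ (Submodule.subset_span (sin_mem_trigSet _ (natAbs_succ_le hd).2)))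
  | zero =>
    have : (fun x => (0 : ℝ → ℝ) x * Real.cos x) = 0 := by funext x; simp
    rw [this]; exact Submodule.zero_mem _
  | add g h _ _ hg' hh' =>
    have : (fun x => (g + h) x * Real.cos x)
        = (fun x => g x * Real.cos x) + fun x => h x * Real.cos x := by
      funext x; simp [add_mul]
    rw [this]; exact Submodule.add_mem _ hg' hh'
  | smul a g _ hg' =>
    have : (fun x => (a • g) x * Real.cos x) = a • fun x => g x * Real.cos x := by
      funext x; simp [mul_assoc]
    rw [this]; exact Submodule.smul_mem _ _ hg'

lemma mul_sin_mem {k : ℕ} {f : ℝ → ℝ} (hf : f ∈ Submodule.span ℝ (trigSet k)) :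
    (fun x => f x * Real.sin x) ∈ Submodule.span ℝ (trigSet (k + 1)) := by
  induction hf using Submodule.span_induction with
  | mem g hg =>
    obtain ⟨d, hd, hg | hg⟩ := hg <;> subst hg
    · have : (fun x => Real.cos (d * x) * Real.sin x)
          = (1/2 : ℝ) • (fun x => Real.sin ((d+1:ℤ) * x))
            + (-(1/2) : ℝ) • (fun x => Real.sin ((d-1:ℤ) * x)) := by
        funext x
        simpa using cos_int_mul_sin d x
      rw [this]
      exact Submodule.add_mem _
        (Submodule.smul_mem _ _ (Submodule.subset_span (sin_mem_trigSet _ (natAbs_succ_le hd).1)))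
        (Submodule.smul_mem _ _ (Submodule.subset_span (sin_mem_trigSet _ (natAbs_succ_le hd).2)))
    · have : (fun x => Real.sin (d * x) * Real.sin x)
          = (1/2 : ℝ) • (fun x => Real.cos ((d-1:ℤ) * x))
            + (-(1/2) : ℝ) • (fun x => Real.cos ((d+1:ℤ) * x)) := by
        funext x
        simpa using sin_int_mul_sin d x
      rw [this]
      exact Submodule.add_mem _
        (Submodule.smul_mem _ _ (Submodule.subset_span (cos_mem_trigSet _ (natAbs_succ_le hd).2)))
        (Submodule.smul_mem _ _ (Submodule.subset_span (cos_mem_trigSet _ (natAbs_succ_le hd).1)))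
  | zero =>
    have : (fun x => (0 : ℝ → ℝ) x * Real.sin x) = 0 := by funext x; simp
    rw [this]; exact Submodule.zero_mem _
  | add g h _ _ hg' hh' =>
    have : (fun x => (g + h) x * Real.sin x)
        = (fun x => g x * Real.sin x) + fun x => h x * Real.sin x := by
      funext x; simp [add_mul]
    rw [this]; exact Submodule.add_mem _ hg' hh'
  | smul a g _ hg' =>
    have : (fun x => (a • g) x * Real.sin x) = a • fun x => g x * Real.sin x := by
      funext x; simp [mul_assoc]
    rw [this]; exact Submodule.smul_mem _ _ hg'

lemma mul_cos_sub_mem {k : ℕ} {f : ℝ → ℝ} (s : ℝ)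
    (hf : f ∈ Submodule.span ℝ (trigSet k)) :
    (fun x => f x * Real.cos (x - s)) ∈ Submodule.span ℝ (trigSet (k + 1)) := by
  have : (fun x => f x * Real.cos (x - s))
      = Real.cos s • (fun x => f x * Real.cos x) + Real.sin s • fun x => f x * Real.sin x := by
    funext x
    simp only [Pi.add_apply, Pi.smul_apply, smul_eq_mul]
    rw [Real.cos_sub]; ring
  rw [this]
  exact Submodule.add_mem _ (Submodule.smul_mem _ _ (mul_cos_mem hf))
    (Submodule.smul_mem _ _ (mul_sin_mem hf))

lemma prod_one_sub_cos_mem {ι : Type*} [DecidableEq ι] (S : Finset ι) (s : ι → ℝ) :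
    (fun x => ∏ j ∈ S, (1 - Real.cos (x - s j))) ∈ Submodule.span ℝ (trigSet S.card) := by
  induction S using Finset.induction with
  | empty =>
    have : (fun x => ∏ j ∈ (∅ : Finset ι), (1 - Real.cos (x - s j)))
        = fun x => Real.cos ((0 : ℤ) * x) := by
      funext x; simp
    rw [this]
    exact Submodule.subset_span (cos_mem_trigSet 0 (by simp))
  | @insert a S ha ih =>
    rw [Finset.card_insert_of_notMem ha]
    have hS1 : (fun x => ∏ j ∈ S, (1 - Real.cos (x - s j)))
        ∈ Submodule.span ℝ (trigSet (S.card + 1)) :=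
      Submodule.span_mono (trigSet_mono (Nat.le_succ _)) ih
    have : (fun x => ∏ j ∈ insert a S, (1 - Real.cos (x - s j)))
        = (fun x => ∏ j ∈ S, (1 - Real.cos (x - s j)))
          - fun x => (∏ j ∈ S, (1 - Real.cos (x - s j))) * Real.cos (x - s a) := by
      funext x
      rw [Finset.prod_insert ha]
      simp only [Pi.sub_apply]
      ring
    rw [this]
    exact Submodule.sub_mem _ hS1 (mul_cos_sub_mem _ ih)

/- ### The submodule of functions of the form `c + ⟪u, γ(·)⟫` -/

/-- Functions of the form `x ↦ c + ⟪u, trigMoment m x⟫`. -/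
def trigV (m : ℕ) : Submodule ℝ (ℝ → ℝ) where
  carrier := {f | ∃ c : ℝ, ∃ u : EuclideanSpace ℝ (Fin m), ∀ x,
    f x = c + inner ℝ u (trigMoment m x)}
  add_mem' := by
    rintro f g ⟨cf, uf, hf⟩ ⟨cg, ug, hg⟩
    exact ⟨cf + cg, uf + ug, fun x => by
      simp only [Pi.add_apply, hf x, hg x, inner_add_left]; ring⟩
  zero_mem' := ⟨0, 0, fun x => by simp⟩
  smul_mem' := by
    rintro a f ⟨c, u, hf⟩
    exact ⟨a * c, a • u, fun x => by
      simp only [Pi.smul_apply, smul_eq_mul, hf x, real_inner_smul_left]; ring⟩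

lemma const_mem_trigV (m : ℕ) (c : ℝ) : (fun _ : ℝ => c) ∈ trigV m :=
  ⟨c, 0, fun x => by simp⟩

lemma coord_mem_trigV (m : ℕ) (i : Fin m) (a : ℝ) :
    (fun x => a * trigMoment m x i) ∈ trigV m := by
  refine ⟨0, EuclideanSpace.single i a, fun x => ?_⟩
  rw [EuclideanSpace.inner_single_left]
  simp

lemma trigSet_subset_trigV {m : ℕ} (hm : Even m) :
    trigSet (m / 2) ⊆ (trigV m : Set (ℝ → ℝ)) := by
  obtain ⟨k, hk⟩ := hm
  have hm2 : m = 2 * k := by omega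
  have hmk : m / 2 = k := by omega
  rw [hmk]
  rintro f ⟨d, hd, hf | hf⟩ <;> subst hf
  · rcases eq_or_ne d 0 with h0 | h0
    · subst h0
      have : (fun x => Real.cos ((0:ℤ) * x)) = fun _ : ℝ => (1:ℝ) := by
        funext x; simp
      rw [this]; exact const_mem_trigV m 1
    · set e : ℕ := d.natAbs with he
      have he1 : 1 ≤ e := by omega
      have hi : 2 * (e - 1) < m := by omega
      set i : Fin m := ⟨2 * (e - 1), hi⟩ with hidef
      have hcoord : ∀ x, trigMoment m x i = Real.cos (e * x) := by
        intro x
        have h1 : (i : ℕ) % 2 = 0 := by simp [hidef, Nat.mul_mod_right]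
        have h2 : (i : ℕ) / 2 + 1 = e := by simp [hidef]; omega
        have hrfl : trigMoment m x i
            = if (i : ℕ) % 2 = 0 then Real.cos (((i : ℕ) / 2 + 1 : ℕ) * x)
              else Real.sin (((i : ℕ) / 2 + 1 : ℕ) * x) := rfl
        rw [hrfl, if_pos h1, h2]
      have hce : ∀ x, Real.cos (d * x) = Real.cos (e * x) := by
        intro x
        rcases le_or_gt 0 d with hdn | hdn
        · have : ((e : ℤ) : ℝ) = (d : ℝ) := by
            rw [he, Int.natAbs_of_nonneg hdn]
          push_cast at this ⊢
          rw [this]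
        · have : ((e : ℤ) : ℝ) = -(d : ℝ) := by
            have : (e : ℤ) = -d := by omega
            rw [this]; push_cast; ring
          push_cast at this ⊢
          rw [this, show -(d:ℝ) * x = -((d:ℝ) * x) by ring, Real.cos_neg]
      have : (fun x => Real.cos (d * x)) = fun x => 1 * trigMoment m x i := by
        funext x; rw [hcoord x, hce x, one_mul]
      rw [this]
      exact coord_mem_trigV m i 1
  · rcases eq_or_ne d 0 with h0 | h0
    · subst h0
      have : (fun x => Real.sin ((0:ℤ) * x)) = fun _ : ℝ => (0:ℝ) := by
        funext x; simp
      rw [this]; exact const_mem_trigV m 0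
    · set e : ℕ := d.natAbs with he
      have he1 : 1 ≤ e := by omega
      have hi : 2 * e - 1 < m := by omega
      set i : Fin m := ⟨2 * e - 1, hi⟩ with hidef
      have hcoord : ∀ x, trigMoment m x i = Real.sin (e * x) := by
        intro x
        have h1 : ¬ ((i : ℕ) % 2 = 0) := by simp [hidef]; omega
        have h2 : (i : ℕ) / 2 + 1 = e := by simp [hidef]; omega
        have hrfl : trigMoment m x i
            = if (i : ℕ) % 2 = 0 then Real.cos (((i : ℕ) / 2 + 1 : ℕ) * x)
              else Real.sin (((i : ℕ) / 2 + 1 : ℕ) * x) := rfl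
        rw [hrfl, if_neg h1, h2]
      rcases le_or_gt 0 d with hdn | hdn
      · have hse : ∀ x, Real.sin (d * x) = 1 * Real.sin (e * x) := by
          intro x
          have : ((e : ℤ) : ℝ) = (d : ℝ) := by rw [he, Int.natAbs_of_nonneg hdn]
          push_cast at this ⊢
          rw [this, one_mul]
        have : (fun x => Real.sin (d * x)) = fun x => 1 * trigMoment m x i := by
          funext x; rw [hcoord x, hse x]
        rw [this]; exact coord_mem_trigV m i 1
      · have hse : ∀ x, Real.sin (d * x) = (-1) * Real.sin (e * x) := by
          intro x
          have : ((e : ℤ) : ℝ) = -(d : ℝ) := by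
            have : (e : ℤ) = -d := by omega
            rw [this]; push_cast; ring
          push_cast at this ⊢
          rw [this, show -(d:ℝ) * x = -((d:ℝ) * x) by ring, Real.sin_neg]; ring
        have : (fun x => Real.sin (d * x)) = fun x => (-1) * trigMoment m x i := by
          funext x; rw [hcoord x, hse x]
        rw [this]; exact coord_mem_trigV m i (-1)

/- ### The face lemma -/

lemma trig_face (m n : ℕ) (hm4 : 4 ≤ m) (hmeven : Even m) (hn : m + 1 ≤ n)
    (t : Fin n → ℝ) (hinj : Function.Injective t)
    (ht : ∀ i, t i ∈ Set.Ico (0 : ℝ) (2 * π))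
    (S : Finset (Fin n)) (hSne : S.Nonempty) (hScard : S.card ≤ m / 2) :
    ∃ (u : EuclideanSpace ℝ (Fin m)) (c : ℝ), u ≠ 0 ∧
      ∀ i : Fin n, inner ℝ u (trigMoment m (t i)) ≤ c ∧
        ((inner ℝ u (trigMoment m (t i)) : ℝ) = c ↔ i ∈ S) := by
  classical
  set f : ℝ → ℝ := fun x => ∏ j ∈ S, (1 - Real.cos (x - t j)) with hfdef
  -- f belongs to trigV m
  have hfV : f ∈ trigV m := by
    have h1 : f ∈ Submodule.span ℝ (trigSet S.card) := prod_one_sub_cos_mem S t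
    have h2 : f ∈ Submodule.span ℝ (trigSet (m / 2)) :=
      Submodule.span_mono (trigSet_mono hScard) h1
    have h3 : Submodule.span ℝ (trigSet (m / 2)) ≤ trigV m :=
      Submodule.span_le.mpr (trigSet_subset_trigV hmeven)
    exact h3 h2
  obtain ⟨c, u, hcu⟩ := hfV
  -- basic positivity facts about f
  have hffact : ∀ j, (0:ℝ) ≤ 1 - Real.cos j := fun j => by
    have := Real.cos_le_one j; linarith
  have hfnonneg : ∀ x, 0 ≤ f x := fun x =>
    Finset.prod_nonneg fun j _ => hffact _
  have hzero : ∀ i : Fin n, f (t i) = 0 ↔ i ∈ S := by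
    intro i
    constructor
    · intro h
      rw [hfdef] at h
      obtain ⟨j, hjS, hj⟩ := Finset.prod_eq_zero_iff.mp h
      have hij : Real.cos (t i - t j) = 1 := by linarith
      have hb1 := (ht i).1; have hb2 := (ht i).2
      have hb3 := (ht j).1; have hb4 := (ht j).2
      have : t i - t j = 0 :=
        (Real.cos_eq_one_iff_of_lt_of_lt (by linarith) (by linarith)).mp hij
      have : t i = t j := by linarith
      rwa [hinj this]
    · intro h
      rw [hfdef]
      exact Finset.prod_eq_zero h (by simp)
  have hpos : ∀ i : Fin n, i ∉ S → 0 < f (t i) := by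
    intro i hiS
    rw [hfdef]
    apply Finset.prod_pos
    intro j hjS
    rcases lt_or_eq_of_le (hffact (t i - t j)) with h | h
    · exact h
    · exfalso
      have hij : Real.cos (t i - t j) = 1 := by linarith
      have hb1 := (ht i).1; have hb2 := (ht i).2
      have hb3 := (ht j).1; have hb4 := (ht j).2
      have : t i - t j = 0 :=
        (Real.cos_eq_one_iff_of_lt_of_lt (by linarith) (by linarith)).mp hij
      have : t i = t j := by linarith
      exact hiS (hinj this ▸ hjS)
  -- u ≠ 0
  have hu : u ≠ 0 := by
    intro hu0
    obtain ⟨j0, hj0⟩ := hSne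
    have hc0 : c = 0 := by
      have := hcu (t j0)
      rw [hu0] at this
      simp at this
      rw [← this]
      exact (hzero j0).mpr hj0
    have hSn : S ≠ Finset.univ := by
      intro h
      have : S.card = n := by rw [h, Finset.card_univ, Fintype.card_fin]
      have : m / 2 ≥ n := by omega
      omega
    have : Sᶜ.Nonempty := by
      rw [← Finset.card_pos, Finset.card_compl]
      have : S.card < Fintype.card (Fin n) := by
        rcases lt_or_eq_of_le (Finset.card_le_univ S) with h | h
        · simpa using h
        · exact absurd (Finset.eq_univ_of_card S h) hSn
      omega
    obtain ⟨i0, hi0⟩ := this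
    rw [Finset.mem_compl] at hi0
    have h1 : 0 < f (t i0) := hpos i0 hi0
    have h2 : f (t i0) = 0 := by
      have := hcu (t i0)
      rw [hu0, hc0] at this
      simpa using this
    linarith
  -- the supporting hyperplane
  refine ⟨-u, c, neg_ne_zero.mpr hu, fun i => ?_⟩
  have hval : (inner ℝ (-u) (trigMoment m (t i)) : ℝ) = c - f (t i) := by
    rw [inner_neg_left]
    have := hcu (t i)
    linarith
  constructor
  · rw [hval]
    have := hfnonneg (t i)
    linarith
  · rw [hval, ← hzero i]
    constructor
    · intro h; linarith
    · intro h; rw [h]; ring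

/- ### Counting roots: the affine span is everything -/

lemma sum_range_two_mul {α : Type*} [AddCommMonoid α] (k : ℕ) (f : ℕ → α) :
    ∑ i ∈ Finset.range (2 * k), f i = ∑ d ∈ Finset.range k, (f (2 * d) + f (2 * d + 1)) := by
  induction k with
  | zero => simp
  | succ k ih =>
    have : 2 * (k + 1) = (2 * k) + 1 + 1 := by ring
    rw [this, Finset.sum_range_succ, Finset.sum_range_succ, ih, Finset.sum_range_succ,
      add_assoc]

theorem stmt_17_span (m n : ℕ) (hm4 : 4 ≤ m) (hmeven : Even m) (hn : m + 1 ≤ n)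
    (t : Fin n → ℝ) (hinj : Function.Injective t)
    (ht : ∀ i, t i ∈ Set.Ico (0 : ℝ) (2 * π)) :
    affineSpan ℝ (Set.range fun i => trigMoment m (t i)) = ⊤ := by
  classical
  set p : Fin n → EuclideanSpace ℝ (Fin m) := fun i => trigMoment m (t i) with hp
  by_contra hcon
  have hn0 : 0 < n := by omega
  have hne : (Set.range p).Nonempty := ⟨p ⟨0, hn0⟩, Set.mem_range_self _⟩
  -- get a normal vector
  have hvs : vectorSpan ℝ (Set.range p) ≠ ⊤ := by
    intro h
    exact hcon ((AffineSubspace.affineSpan_eq_top_iff_vectorSpan_eq_top_of_nonempty ℝ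
      (EuclideanSpace ℝ (Fin m)) (EuclideanSpace ℝ (Fin m)) hne).mpr h)
  have horth : (vectorSpan ℝ (Set.range p))ᗮ ≠ ⊥ := by
    intro h
    exact hvs (Submodule.orthogonal_eq_bot_iff.mp h)
  obtain ⟨u, huW, hu⟩ := Submodule.exists_mem_ne_zero_of_ne_bot horth
  set i0 : Fin n := ⟨0, hn0⟩
  set c : ℝ := inner ℝ u (p i0) with hc
  have hconst : ∀ i, (inner ℝ u (p i) : ℝ) = c := by
    intro i
    have hmem : p i -ᵥ p i0 ∈ vectorSpan ℝ (Set.range p) :=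
      vsub_mem_vectorSpan ℝ (Set.mem_range_self i) (Set.mem_range_self i0)
    have := (Submodule.mem_orthogonal _ u).mp huW _ hmem
    have h2 : (inner ℝ u (p i - p i0) : ℝ) = 0 := by
      rw [real_inner_comm]; exact this
    rw [inner_sub_right] at h2
    linarith
  -- set up the polynomial
  obtain ⟨k, hk⟩ := hmeven
  have hm2 : m = 2 * k := by omega
  have hk2 : 2 ≤ k := by omega
  set U : ℕ → ℝ := fun j => if h : j < m then u ⟨j, h⟩ else 0 with hU
  set a : ℕ → ℝ := fun d => U (2 * d) with ha
  set b : ℕ → ℝ := fun d => U (2 * d + 1) with hb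
  -- inner product as a trig sum
  have hinner : ∀ x : ℝ, (inner ℝ u (trigMoment m x) : ℝ)
      = ∑ d ∈ Finset.range k, (a d * Real.cos ((d + 1 : ℕ) * x)
        + b d * Real.sin ((d + 1 : ℕ) * x)) := by
    intro x
    have h1 : (inner ℝ u (trigMoment m x) : ℝ)
        = ∑ j : Fin m, u j * trigMoment m x j := by
      rw [PiLp.inner_apply]
      congr 1
      funext j; simp [mul_comm]
    rw [h1]
    set F : ℕ → ℝ := fun jn => U jn * (if jn % 2 = 0 then Real.cos ((jn / 2 + 1 : ℕ) * x)
      else Real.sin ((jn / 2 + 1 : ℕ) * x)) with hF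
    have h2 : ∀ j : Fin m, u j * trigMoment m x j = F (j : ℕ) := by
      intro j
      rw [hF]
      simp only [hU, dif_pos j.isLt, Fin.eta]
      rfl
    have h3 : ∑ j : Fin m, u j * trigMoment m x j = ∑ jn ∈ Finset.range m, F jn := by
      rw [← Fin.sum_univ_eq_sum_range F m]
      exact Finset.sum_congr rfl fun j _ => h2 j
    rw [h3, hm2, sum_range_two_mul]
    apply Finset.sum_congr rfl
    intro d _
    have e1 : (2 * d) % 2 = 0 := by omega
    have e2 : (2 * d) / 2 = d := by omega
    have e3 : ¬ ((2 * d + 1) % 2 = 0) := by omega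
    have e4 : (2 * d + 1) / 2 = d := by omega
    simp only [hF, ha, hb, e1, e2, e3, e4, if_true, if_false]
  -- the complex polynomial
  set Q : Polynomial ℂ := Polynomial.C (-(c:ℂ)) * Polynomial.X ^ k
      + ∑ d ∈ Finset.range k,
        (Polynomial.C (((a d : ℂ) - (b d : ℂ) * Complex.I) / 2) * Polynomial.X ^ (k + d + 1)
          + Polynomial.C (((a d : ℂ) + (b d : ℂ) * Complex.I) / 2)
            * Polynomial.X ^ (k - (d + 1))) with hQ
  -- evaluation of Q at exp(x * I)
  have heval : ∀ x : ℝ, Q.eval (Complex.exp (x * Complex.I))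
      = Complex.exp (x * Complex.I) ^ k * (((inner ℝ u (trigMoment m x) : ℝ) : ℂ) - (c : ℂ)) := by
    intro x
    set E : ℂ := Complex.exp (x * Complex.I) with hE
    have hE0 : E ≠ 0 := Complex.exp_ne_zero _
    have hpow : ∀ j : ℕ, Complex.exp ((j : ℂ) * (x * Complex.I)) = E ^ j := fun j =>
      Complex.exp_nat_mul _ j
    rw [hQ]
    simp only [Polynomial.eval_add, Polynomial.eval_mul, Polynomial.eval_pow,
      Polynomial.eval_C, Polynomial.eval_X, Polynomial.eval_finset_sum]
    rw [hinner x]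
    push_cast
    have hterm : ∀ d ∈ Finset.range k,
        ((((a d : ℝ) : ℂ) - ((b d : ℝ) : ℂ) * Complex.I) / 2 * E ^ (k + d + 1)
          + (((a d : ℝ) : ℂ) + ((b d : ℝ) : ℂ) * Complex.I) / 2 * E ^ (k - (d + 1)))
        = E ^ k * (((a d : ℝ) : ℂ) * Complex.cos (((d : ℂ) + 1) * (x : ℂ))
            + ((b d : ℝ) : ℂ) * Complex.sin (((d : ℂ) + 1) * (x : ℂ))) := by
      intro d hd
      rw [Finset.mem_range] at hd
      have h1 : k + d + 1 = k + (d + 1) := by omega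
      have hw : Complex.exp ((((d : ℂ) + 1) * (x : ℂ)) * Complex.I) = E ^ (d + 1) := by
        rw [← hpow (d + 1)]
        push_cast
        ring_nf
      have hw' : Complex.exp (-(((d : ℂ) + 1) * (x : ℂ)) * Complex.I) = (E ^ (d + 1))⁻¹ := by
        rw [show -(((d : ℂ) + 1) * (x : ℂ)) * Complex.I
            = -((((d : ℂ) + 1) * (x : ℂ)) * Complex.I) by ring, Complex.exp_neg, hw]
      have hw0 : E ^ (d + 1) ≠ 0 := pow_ne_zero _ hE0
      rw [h1, pow_add, pow_sub₀ E hE0 (by omega : d + 1 ≤ k)]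
      rw [Complex.cos, Complex.sin, hw, hw']
      field_simp
      ring
    rw [Finset.sum_congr rfl hterm, mul_sub, Finset.mul_sum]
    ring
  -- Q is not zero
  have hQne : Q ≠ 0 := by
    obtain ⟨j, hj⟩ : ∃ j, u j ≠ 0 := by
      by_contra h
      push_neg at h
      exact hu (by ext i; simpa using h i)
    set e : ℕ := (j : ℕ) / 2 with hedef
    have hek : e < k := by have := j.isLt; omega
    have hcoeff : Q.coeff (k + e + 1) = ((a e : ℂ) - (b e : ℂ) * Complex.I) / 2 := by
      rw [hQ, Polynomial.coeff_add, Polynomial.coeff_C_mul, Polynomial.coeff_X_pow,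
        Polynomial.finset_sum_coeff]
      have h0 : (if k + e + 1 = k then (1:ℂ) else 0) = 0 := by rw [if_neg]; omega
      rw [h0, mul_zero, zero_add]
      have hsummand : ∀ d ∈ Finset.range k,
          (Polynomial.C (((a d : ℂ) - (b d : ℂ) * Complex.I) / 2) * Polynomial.X ^ (k + d + 1)
            + Polynomial.C (((a d : ℂ) + (b d : ℂ) * Complex.I) / 2)
              * Polynomial.X ^ (k - (d + 1))).coeff (k + e + 1)
          = if d = e then ((a e : ℂ) - (b e : ℂ) * Complex.I) / 2 else 0 := by
        intro d hd
        rw [Finset.mem_range] at hd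
        rw [Polynomial.coeff_add, Polynomial.coeff_C_mul, Polynomial.coeff_X_pow,
          Polynomial.coeff_C_mul, Polynomial.coeff_X_pow]
        have h2 : ¬ (k + e + 1 = k - (d + 1)) := by omega
        rw [if_neg h2, mul_zero, add_zero]
        by_cases hde : d = e
        · subst hde; rw [if_pos rfl, if_pos rfl, mul_one]
        · rw [if_neg (by omega), if_neg hde, mul_zero]
      rw [Finset.sum_congr rfl hsummand, Finset.sum_ite_eq' (Finset.range k) e,
        if_pos (Finset.mem_range.mpr hek)]
    intro hQ0
    rw [hQ0, Polynomial.coeff_zero] at hcoeff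
    have h2 : ((a e : ℝ) : ℂ) - ((b e : ℝ) : ℂ) * Complex.I = 0 := by
      have := hcoeff.symm
      rw [div_eq_zero_iff] at this
      rcases this with h | h
      · exact h
      · norm_num at h
    have h3 : a e = 0 ∧ b e = 0 := by
      have hre := congrArg Complex.re h2
      have him := congrArg Complex.im h2
      simp [Complex.sub_re, Complex.sub_im, Complex.mul_re, Complex.mul_im] at hre him
      exact ⟨hre, him⟩
    have hUj : U (j : ℕ) = u j := by
      rw [hU]; simp only [dif_pos j.isLt, Fin.eta]
    obtain hj2 | hj2 := (by omega : (j : ℕ) = 2 * e ∨ (j : ℕ) = 2 * e + 1)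
    · exact hj (by rw [← hUj, hj2]; exact h3.1)
    · exact hj (by rw [← hUj, hj2]; exact h3.2)
  -- degree bound
  have hdeg : Q.natDegree ≤ m := by
    rw [hQ, hm2]
    apply le_trans (Polynomial.natDegree_add_le _ _)
    apply max_le
    · apply le_trans (Polynomial.natDegree_C_mul_le _ _)
      rw [Polynomial.natDegree_X_pow]; omega
    · apply Polynomial.natDegree_sum_le_of_forall_le
      intro d hd
      rw [Finset.mem_range] at hd
      apply le_trans (Polynomial.natDegree_add_le _ _)
      apply max_le
      · apply le_trans (Polynomial.natDegree_C_mul_le _ _)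
        rw [Polynomial.natDegree_X_pow]; omega
      · apply le_trans (Polynomial.natDegree_C_mul_le _ _)
        rw [Polynomial.natDegree_X_pow]; omega
  -- the points give n distinct roots
  set z : Fin n → ℂ := fun i => Complex.exp ((t i : ℂ) * Complex.I) with hz
  have hroot : ∀ i, Q.eval (z i) = 0 := by
    intro i
    show Q.eval (Complex.exp ((t i : ℂ) * Complex.I)) = 0
    rw [heval (t i)]
    have hcc : (inner ℝ u (trigMoment m (t i)) : ℝ) = c := hconst i
    rw [hcc]
    simp
  have hzinj : Function.Injective z := by
    intro i j hij
    have hij' : Complex.exp ((t i : ℂ) * Complex.I) = Complex.exp ((t j : ℂ) * Complex.I) := hij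
    obtain ⟨nn, hnn⟩ := Complex.exp_eq_exp_iff_exists_int.mp hij'
    have h2 : (t i : ℂ) = (t j : ℂ) + (nn : ℂ) * (2 * (π : ℂ)) :=
      mul_right_cancel₀ Complex.I_ne_zero (by rw [hnn]; ring)
    have h3 : t i = t j + (nn : ℝ) * (2 * π) := by exact_mod_cast h2
    have hb1 := (ht i).1; have hb2 := (ht i).2
    have hb3 := (ht j).1; have hb4 := (ht j).2
    have hpi := Real.pi_pos
    have hnn0 : nn = 0 := by
      rcases lt_trichotomy nn 0 with h | h | h
      · exfalso
        have hle : nn ≤ -1 := by omega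
        have hle' : (nn : ℝ) ≤ -1 := by exact_mod_cast hle
        nlinarith
      · exact h
      · exfalso
        have hle : 1 ≤ nn := by omega
        have hle' : (1 : ℝ) ≤ (nn : ℝ) := by exact_mod_cast hle
        nlinarith
    rw [hnn0] at h3
    simp at h3
    exact hinj h3
  -- count roots
  have himg : (Finset.univ.image z) ⊆ Q.roots.toFinset := by
    intro w hw
    rw [Finset.mem_image] at hw
    obtain ⟨i, _, rfl⟩ := hw
    rw [Multiset.mem_toFinset, Polynomial.mem_roots']
    exact ⟨hQne, hroot i⟩
  have hcard1 : n ≤ (Q.roots.toFinset).card := by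
    calc n = (Finset.univ.image z).card := by
          rw [Finset.card_image_of_injective _ hzinj, Finset.card_univ, Fintype.card_fin]
      _ ≤ _ := Finset.card_le_card himg
  have hcard2 : (Q.roots.toFinset).card ≤ Q.natDegree :=
    le_trans (Multiset.toFinset_card_le _) (Polynomial.card_roots' Q)
  omega

/-- Points on the trigonometric moment curve (distinct parameters in `[0, 2π)`,
`m` even, `m ≥ 4`, `n ≥ m + 1`) span an `m`-dimensional polytope in which every
`m/2` of the points form a face; in particular every pair is joined by an edge. -/
theorem stmt_17 (m n : ℕ) (hm4 : 4 ≤ m) (hmeven : Even m) (hn : m + 1 ≤ n)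
    (t : Fin n → ℝ) (hinj : Function.Injective t)
    (ht : ∀ i, t i ∈ Set.Ico (0 : ℝ) (2 * π)) :
    (affineSpan ℝ (Set.range fun i => trigMoment m (t i)) = ⊤) ∧
    (∀ S : Finset (Fin n), S.card = m / 2 →
      ∃ (u : EuclideanSpace ℝ (Fin m)) (c : ℝ), u ≠ 0 ∧
        ∀ i : Fin n, inner ℝ u (trigMoment m (t i)) ≤ c ∧
          ((inner ℝ u (trigMoment m (t i)) : ℝ) = c ↔ i ∈ S)) ∧
    (∀ i j : Fin n, i ≠ j →
      ∃ (u : EuclideanSpace ℝ (Fin m)) (c : ℝ), u ≠ 0 ∧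
        ∀ l : Fin n, inner ℝ u (trigMoment m (t l)) ≤ c ∧
          ((inner ℝ u (trigMoment m (t l)) : ℝ) = c ↔ l = i ∨ l = j)) := by
  classical
  refine ⟨stmt_17_span m n hm4 hmeven hn t hinj ht, ?_, ?_⟩
  · intro S hS
    have hSne : S.Nonempty := by
      rw [← Finset.card_pos, hS]; omega
    exact trig_face m n hm4 hmeven hn t hinj ht S hSne (le_of_eq hS)
  · intro i j hij
    have hcard : ({i, j} : Finset (Fin n)).card = 2 := by
      rw [Finset.card_insert_of_notMem (by simpa using hij), Finset.card_singleton]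
    obtain ⟨u, c, hu, h⟩ := trig_face m n hm4 hmeven hn t hinj ht {i, j}
      ⟨i, by simp⟩ (by rw [hcard]; omega)
    refine ⟨u, c, hu, fun l => ⟨(h l).1, ?_⟩⟩
    rw [(h l).2]
    simp [Finset.mem_insert]
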